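/- Let p ≥ 5 be a prime and m ≥ 1 an integer. Then in ℤ[q], [p]_q^3 divides C((m+1)p, p)_q − C(m+1, 1)_{q^{p^2}} + C(m+1, 2)·((p^2−1)/12)·(1−q)^2 [p]_q^2. -/

import Mathlib

open Polynomial Finset

/-- The q-integer [n]_q = 1 + q + ... + q^(n-1) in ℤ[q]. -/
noncomputable def qInt (n : ℕ) : Polynomial ℤ := ∑ i ∈ Finset.range n, X ^ i

/-- The Gaussian (q-)binomial coefficient in ℤ[q], via the q-Pascal recurrence. -/
noncomputable def qBinom : ℕ → ℕ → Polynomial ℤ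
  | _, 0 => 1
  | 0, _ + 1 => 0
  | n + 1, k + 1 => qBinom n k + X ^ (k + 1) * qBinom n (k + 1)

lemma qBinom_zero (n : ℕ) : qBinom n 0 = 1 := by cases n <;> rfl

lemma qBinom_zero_succ (k : ℕ) : qBinom 0 (k+1) = 0 := rfl

lemma qBinom_succ_succ (n k : ℕ) :
    qBinom (n+1) (k+1) = qBinom n k + X ^ (k+1) * qBinom n (k+1) := rfl

lemma qBinom_eq_zero : ∀ {n k : ℕ}, n < k → qBinom n k = 0 := by
  intro n
  induction n with
  | zero => intro k hk; cases k with
    | zero => omega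
    | succ k => rfl
  | succ n ih =>
    intro k hk
    cases k with
    | zero => omega
    | succ k =>
      rw [qBinom_succ_succ, ih (by omega), ih (by omega)]
      ring

lemma qBinom_self : ∀ n : ℕ, qBinom n n = 1 := by
  intro n
  induction n with
  | zero => rfl
  | succ n ih =>
    rw [qBinom_succ_succ, ih, qBinom_eq_zero (by omega)]
    ring

lemma qInt_succ (n : ℕ) : qInt (n+1) = qInt n + X ^ n := by
  simp [qInt, Finset.sum_range_succ]

lemma qInt_succ' (n : ℕ) : qInt (n+1) = 1 + X * qInt n := by
  simp [qInt, Finset.sum_range_succ', Finset.mul_sum, pow_succ, mul_comm]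
  ring

lemma qInt_add (a b : ℕ) : qInt (a+b) = qInt a + X ^ a * qInt b := by
  simp [qInt, Finset.sum_range_add, Finset.mul_sum, pow_add]

lemma qBinom_one (n : ℕ) : qBinom n 1 = qInt n := by
  induction n with
  | zero => rfl
  | succ n ih =>
    rw [show (1:ℕ) = 0 + 1 from rfl, qBinom_succ_succ, qBinom_zero, ih, qInt_succ', pow_one]

lemma qBinom_succ_succ' : ∀ (n k : ℕ),
    qBinom (n+1) (k+1) = X ^ (n-k) * qBinom n k + qBinom n (k+1) := by
  intro n
  induction n with
  | zero =>
    intro k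
    cases k with
    | zero => simp [qBinom_succ_succ, qBinom_zero, qBinom_zero_succ]
    | succ k => simp [qBinom_succ_succ, qBinom_zero_succ]
  | succ n ih =>
    intro k
    rcases Nat.lt_or_ge (n+1) k with h | h
    · rw [qBinom_eq_zero (show n+1+1 < k+1 by omega), qBinom_eq_zero (show n+1 < k by omega),
        qBinom_eq_zero (show n+1 < k+1 by omega)]
      ring
    cases k with
    | zero =>
      simp only [Nat.zero_add, Nat.sub_zero]
      rw [qBinom_one, qBinom_zero, qBinom_one, qInt_succ (n+1)]
      ring
    | succ j =>
      -- h : j + 1 ≤ n + 1, so j ≤ n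
      have hE : (X^(j+1) - 1) * qBinom n (j+1) = (X^(n-j) - 1) * qBinom n j := by
        have h1 := qBinom_succ_succ n j
        rw [ih j] at h1
        linear_combination -h1
      rcases Nat.lt_or_ge j n with hj | hj
      · -- j < n
        have hE2 : (X^(j+2) - 1) * qBinom n (j+2) = (X^(n-(j+1)) - 1) * qBinom n (j+1) := by
          have h1 := qBinom_succ_succ n (j+1)
          rw [ih (j+1)] at h1
          linear_combination -h1
        obtain ⟨d, rfl⟩ : ∃ d, n = j + 1 + d := ⟨n - j - 1, by omega⟩
        rw [qBinom_succ_succ (j+1+d+1) (j+1), ih (j+1), qBinom_succ_succ (j+1+d) j]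
        rw [show j+1+d+1 - (j+1) = d+1 by omega, show j+1+d - (j+1) = d by omega,
          show j+1+d - j = d+1 by omega] at *
        linear_combination hE2 + hE
      · -- j = n
        have hj' : j = n := by omega
        subst hj'
        rw [qBinom_self, qBinom_eq_zero (show j+1 < j+1+1 by omega)]
        simp [qBinom_self]

lemma qVdm (a b : ℕ) : ∀ n : ℕ, qBinom (a+b) n
    = ∑ j ∈ Finset.range (n+1), qBinom a j * qBinom b (n-j) * X^((a-j)*(n-j)) := by
  induction a with
  | zero =>
    intro n
    rw [Finset.sum_eq_single 0]
    · simp [qBinom_zero]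
    · intro j hj hj0
      obtain ⟨i, rfl⟩ := Nat.exists_eq_succ_of_ne_zero hj0
      rw [qBinom_zero_succ]
      ring
    · intro h; exact absurd (Finset.mem_range.2 (by omega)) h
  | succ a ih =>
    intro n
    cases n with
    | zero => simp [qBinom_zero]
    | succ n =>
      have key : qBinom (a+1+b) (n+1) = qBinom (a+b) n + X^(n+1) * qBinom (a+b) (n+1) := by
        rw [show a+1+b = (a+b)+1 by omega, qBinom_succ_succ]
      rw [key, ih n, ih (n+1),
        Finset.sum_range_succ' (fun j => qBinom (a+1) j * qBinom b (n+1-j) * X^((a+1-j)*(n+1-j))) (n+1),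
        Finset.sum_range_succ' (fun j => qBinom a j * qBinom b (n+1-j) * X^((a-j)*(n+1-j))) (n+1)]
      have hterm : ∀ i ∈ Finset.range (n+1),
          qBinom (a+1) (i+1) * qBinom b (n+1-(i+1)) * X^((a+1-(i+1))*(n+1-(i+1)))
          = qBinom a i * qBinom b (n-i) * X^((a-i)*(n-i))
            + X^(i+1) * qBinom a (i+1) * qBinom b (n-i) * X^((a-i)*(n-i)) := by
        intro i hi
        rw [qBinom_succ_succ, show n+1-(i+1) = n-i by omega, show a+1-(i+1) = a-i by omega]
        ring
      rw [Finset.sum_congr rfl hterm, Finset.sum_add_distrib]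
      have h0 : (X:Polynomial ℤ)^(n+1) * (qBinom a 0 * qBinom b (n+1-0) * X^((a-0)*(n+1-0)))
          = qBinom (a+1) 0 * qBinom b (n+1-0) * X^((a+1-0)*(n+1-0)) := by
        rw [qBinom_zero, qBinom_zero, Nat.sub_zero, Nat.sub_zero, Nat.sub_zero,
          show (a+1)*(n+1) = a*(n+1) + (n+1) by ring, pow_add]
        ring
      have hmid : (X:Polynomial ℤ)^(n+1) * ∑ i ∈ Finset.range (n+1),
            qBinom a (i+1) * qBinom b (n+1-(i+1)) * X^((a-(i+1))*(n+1-(i+1)))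
          = ∑ i ∈ Finset.range (n+1),
            X^(i+1) * qBinom a (i+1) * qBinom b (n-i) * X^((a-i)*(n-i)) := by
        rw [Finset.mul_sum]
        refine Finset.sum_congr rfl ?_
        intro i hi
        have hin : i ≤ n := by simpa using Nat.lt_succ_iff.mp (Finset.mem_range.mp hi)
        rw [show n+1-(i+1) = n-i by omega]
        rcases Nat.lt_or_ge i a with hia | hia
        · obtain ⟨e, rfl⟩ : ∃ e, a = i + 1 + e := ⟨a - i - 1, by omega⟩
          obtain ⟨f, rfl⟩ : ∃ f, n = i + f := ⟨n - i, by omega⟩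
          rw [show i+1+e-(i+1) = e by omega, show i+1+e-i = e+1 by omega,
            show i+f-i = f by omega, show (e+1)*f = e*f + f by ring]
          rw [pow_add]
          ring
        · rw [qBinom_eq_zero (show a < i + 1 by omega)]
          ring
      rw [mul_add, hmid, h0]
      ring
lemma qInt_one : qInt 1 = 1 := by simp [qInt]

lemma qInt_mul_X_sub (n : ℕ) : qInt n * (X - 1) = X^n - 1 := geom_sum_mul X n

lemma X_sub_one_ne_zero : (X : Polynomial ℤ) - 1 ≠ 0 := by
  simpa using Polynomial.X_sub_C_ne_zero (1:ℤ)

lemma qE (n k : ℕ) : qInt (n-k) * qBinom n k = qInt (k+1) * qBinom n (k+1) := by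
  have h := (qBinom_succ_succ n k).symm.trans (qBinom_succ_succ' n k)
  apply mul_right_cancel₀ X_sub_one_ne_zero
  rw [mul_assoc, mul_assoc, mul_comm (qBinom n k), mul_comm (qBinom n (k+1)), ← mul_assoc, ← mul_assoc,
    qInt_mul_X_sub, qInt_mul_X_sub]
  linear_combination -h

lemma qMul (n k : ℕ) : qInt (k+1) * qBinom (n+1) (k+1) = qInt (n+1) * qBinom n k := by
  rcases le_or_gt k n with h | h
  · have he := qE n k
    have ha := qInt_add (k+1) (n-k)
    rw [show k+1+(n-k) = n+1 by omega] at ha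
    rw [qBinom_succ_succ, ha]
    linear_combination -(X:Polynomial ℤ)^(k+1) * he
  · rw [qBinom_eq_zero (by omega), qBinom_eq_zero (by omega)]
    ring

lemma qInt_mul_decomp (m p : ℕ) :
    qInt ((m+1)*p) = qInt p * ∑ i ∈ Finset.range (m+1), X^(p*i) := by
  induction m with
  | zero => simp [one_mul]
  | succ m ih =>
    rw [show (m+1+1)*p = (m+1)*p + p by ring, qInt_add, ih,
      Finset.sum_range_succ (fun i => (X:Polynomial ℤ)^(p*i)) (m+1),
      show p*(m+1) = (m+1)*p by ring]
    ring
set_option linter.unusedSectionVars false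
set_option linter.unusedVariables false
section Cyclo

variable {K : Type*} [Field K] [CharZero K] {p : ℕ} {ζ : K}

lemma aeval_qInt (ζ : K) (n : ℕ) : aeval ζ (qInt n) = ∑ i ∈ Finset.range n, ζ^i := by
  simp [qInt]

lemma zeta_pow_mod (hζ : IsPrimitiveRoot ζ p) (hp : 0 < p) {a b : ℕ}
    (h : a ≡ b [MOD p]) : ζ^a = ζ^b := by
  have key : ∀ c : ℕ, ζ^c = ζ^(c % p) := by
    intro c
    conv_lhs => rw [← Nat.div_add_mod c p]
    rw [pow_add, pow_mul, hζ.pow_eq_one, one_pow, one_mul]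
  rw [key a, key b]
  exact congrArg _ h

lemma geom_zeta_zero (hp : 0 < p) (u : K) (hu : u^p = 1) (hne : u ≠ 1) :
    ∑ i ∈ Finset.range p, u^i = 0 := by
  have h := geom_sum_mul u p
  rw [hu, sub_self] at h
  rcases mul_eq_zero.mp h with h' | h'
  · exact h'
  · exact absurd (sub_eq_zero.mp h') hne

lemma aeval_qInt_self (hp : p.Prime) (hζ : IsPrimitiveRoot ζ p) : aeval ζ (qInt p) = 0 := by
  rw [aeval_qInt]
  exact geom_zeta_zero hp.pos ζ hζ.pow_eq_one (hζ.ne_one hp.one_lt)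

lemma aeval_qInt_mul (ζ : K) (n : ℕ) : aeval ζ (qInt n) * (ζ - 1) = ζ^n - 1 := by
  have := congrArg (aeval ζ) (qInt_mul_X_sub n)
  simpa using this

lemma aeval_qInt_ne_zero (hp : p.Prime) (hζ : IsPrimitiveRoot ζ p) {k : ℕ}
    (h1 : 1 ≤ k) (h2 : k < p) : aeval ζ (qInt k) ≠ 0 := by
  intro h0
  have h := aeval_qInt_mul ζ k
  rw [h0, zero_mul] at h
  exact hζ.pow_ne_one_of_pos_of_lt (by omega) h2 (sub_eq_zero.mp h.symm)

lemma qInt_eq_cyclotomic (hp : p.Prime) : qInt p = cyclotomic p ℤ := by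
  haveI : Fact p.Prime := ⟨hp⟩
  rw [Polynomial.cyclotomic_prime]
  rfl

lemma qInt_monic (hp : p.Prime) : (qInt p).Monic := by
  rw [qInt_eq_cyclotomic hp]; exact cyclotomic.monic p ℤ

lemma qInt_prime (hp : p.Prime) : Prime (qInt p) := by
  rw [qInt_eq_cyclotomic hp]
  exact UniqueFactorizationMonoid.irreducible_iff_prime.mp (cyclotomic.irreducible hp.pos)

lemma qInt_dvd_iff (hp : p.Prime) (hζ : IsPrimitiveRoot ζ p) (f : Polynomial ℤ) :
    qInt p ∣ f ↔ aeval ζ f = 0 := by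
  constructor
  · rintro ⟨g, rfl⟩
    rw [map_mul, aeval_qInt_self hp hζ, zero_mul]
  · intro h
    rw [qInt_eq_cyclotomic hp]
    rw [← Polynomial.map_dvd_map (algebraMap ℤ ℚ)
      (RingHom.injective_int _) (cyclotomic.monic p ℤ)]
    rw [map_cyclotomic, cyclotomic_eq_minpoly_rat hζ hp.pos]
    haveI : IsScalarTower ℤ ℚ K := IsScalarTower.of_algebraMap_eq' (RingHom.ext_int _ _)
    exact minpoly.dvd ℚ ζ (by rw [Polynomial.aeval_map_algebraMap (R := ℤ) ℚ ζ f]; exact h)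

end Cyclo
section Cyclo2

set_option linter.unusedSectionVars false

variable {K : Type*} [Field K] [CharZero K] {p : ℕ} {ζ : K}

lemma aeval_qBinom_p (hp : p.Prime) (hζ : IsPrimitiveRoot ζ p) {k : ℕ}
    (h1 : 1 ≤ k) (h2 : k < p) : aeval ζ (qBinom p k) = 0 := by
  have hm := qMul (p-1) (k-1)
  rw [show p-1+1 = p by omega, show k-1+1 = k by omega] at hm
  have := congrArg (aeval ζ) hm
  rw [map_mul, map_mul, aeval_qInt_self hp hζ, zero_mul] at this
  rcases mul_eq_zero.mp this with h | h
  · exact absurd h (aeval_qInt_ne_zero hp hζ h1 h2)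
  · exact h

lemma aeval_shift (hp : p.Prime) (hζ : IsPrimitiveRoot ζ p) (n : ℕ) {j : ℕ} (hj : j < p) :
    aeval ζ (qBinom (p+n) j) = aeval ζ (qBinom n j) := by
  have hv := congrArg (aeval ζ) (qVdm p n j)
  rw [map_sum] at hv
  rw [hv, Finset.sum_eq_single 0]
  · simp only [qBinom_zero, map_mul, map_one, one_mul, Nat.sub_zero, map_pow, aeval_X]
    rw [pow_mul, hζ.pow_eq_one, one_pow, mul_one]
  · intro i hi hi0
    obtain ⟨i', rfl⟩ := Nat.exists_eq_succ_of_ne_zero hi0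
    rw [map_mul, map_mul, aeval_qBinom_p hp hζ (by omega)
      (by have := Finset.mem_range.mp hi; omega), zero_mul, zero_mul]
  · intro h; exact absurd (Finset.mem_range.2 (by omega)) h

lemma aeval_shift_iter (hp : p.Prime) (hζ : IsPrimitiveRoot ζ p) (mm r : ℕ) {j : ℕ} (hj : j < p) :
    aeval ζ (qBinom (mm*p + r) j) = aeval ζ (qBinom r j) := by
  induction mm with
  | zero => rw [zero_mul, zero_add]
  | succ mm ih =>
    rw [show (mm+1)*p + r = p + (mm*p + r) by ring, aeval_shift hp hζ _ hj, ih]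

lemma aeval_R (hp : p.Prime) (hζ : IsPrimitiveRoot ζ p) :
    ∀ j : ℕ, j ≤ p - 1 → ζ^(j*(j+1)/2) * aeval ζ (qBinom (p-1) j) = (-1)^j := by
  intro j
  induction j with
  | zero => simp [qBinom_zero]
  | succ j ih =>
    intro hj
    have hj' : j ≤ p - 1 := by omega
    have hp2 : 2 ≤ p := hp.two_le
    have h0 : aeval ζ (qBinom p (j+1)) = 0 :=
      aeval_qBinom_p hp hζ (by omega) (by omega)
    have hpas := qBinom_succ_succ (p-1) j
    rw [show p-1+1 = p by omega] at hpas
    have hv := congrArg (aeval ζ) hpas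
    rw [h0, map_add, map_mul, map_pow, aeval_X] at hv
    have he : (j+1)*(j+1+1)/2 = j*(j+1)/2 + (j+1) := by
      rw [show (j+1)*(j+1+1) = j*(j+1) + 2*(j+1) by ring,
        Nat.add_mul_div_left _ _ (by norm_num : (0:ℕ) < 2)]
    rw [he, pow_add, pow_succ]
    have ihh := ih hj'
    linear_combination (-ζ^(j*(j+1)/2)) * hv - ihh
end Cyclo2
section Cyclo3

set_option linter.unusedSectionVars false

variable {K : Type*} [Field K] [CharZero K] {p : ℕ} {ζ : K}

lemma lemI (u : K) (n : ℕ) :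
    (u-1) * ∑ j ∈ Finset.range n, (j:K)*u^j = n*u^n - u * ∑ j ∈ Finset.range n, u^j := by
  induction n with
  | zero => simp
  | succ n ih =>
    rw [Finset.sum_range_succ, Finset.sum_range_succ]
    push_cast
    linear_combination ih

lemma Sk_mul (hp : p.Prime) (hζ : IsPrimitiveRoot ζ p) {k : ℕ} (h1 : 1 ≤ k) (h2 : k ≤ p-1) :
    (ζ^k - 1) * ∑ j ∈ Finset.range p, (j:K)*(ζ^k)^j = p := by
  have hI := lemI (ζ^k) p
  have hu : (ζ^k)^p = 1 := by rw [← pow_mul, mul_comm, pow_mul, hζ.pow_eq_one, one_pow]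
  have hne : ζ^k ≠ 1 := hζ.pow_ne_one_of_pos_of_lt (by omega) (by have := hp.two_le; omega)
  rw [hI, hu, geom_zeta_zero hp.pos _ hu hne, mul_one, mul_zero, sub_zero]

lemma orth (hp : p.Prime) (hζ : IsPrimitiveRoot ζ p) {j l : ℕ} (hj : j < p) (hl : l < p) :
    ∑ k ∈ Finset.range p, (ζ^k)^j * (ζ^(p-k))^l = if j = l then (p:K) else 0 := by
  rcases eq_or_ne j l with rfl | hne
  · rw [if_pos rfl]
    have hone : ∀ k ∈ Finset.range p, (ζ^k)^j * (ζ^(p-k))^j = 1 := by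
      intro k hk
      have hk' : k ≤ p := le_of_lt (Finset.mem_range.mp hk)
      rw [← pow_mul, ← pow_mul, ← pow_add, ← Nat.add_mul, Nat.add_sub_cancel' hk',
        pow_mul, hζ.pow_eq_one, one_pow]
    rw [Finset.sum_congr rfl hone, Finset.sum_const, Finset.card_range, nsmul_eq_mul, mul_one]
  · rw [if_neg hne]
    have hterm : ∀ k ∈ Finset.range p, (ζ^k)^j * (ζ^(p-k))^l = (ζ^(j+p-l))^k := by
      intro k hk
      have hk' : k < p := Finset.mem_range.mp hk
      rw [← pow_mul, ← pow_mul, ← pow_add, ← pow_mul]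
      apply zeta_pow_mod hζ hp.pos
      apply Nat.ModEq.add_right_cancel' (l*k)
      have e1 : k*j + (p-k)*l + l*k = k*j + p*l := by
        rw [add_assoc, mul_comm l k, ← Nat.add_mul, Nat.sub_add_cancel hk'.le]
      have e2 : (j+p-l)*k + l*k = j*k + p*k := by
        rw [← Nat.add_mul, show j+p-l+l = j+p by omega, Nat.add_mul]
      rw [e1, e2, mul_comm k j]
      exact Nat.ModEq.add_left _ ((Nat.modEq_zero_iff_dvd.2 ⟨l, rfl⟩).trans
        (Nat.modEq_zero_iff_dvd.2 ⟨k, rfl⟩).symm)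
    rw [Finset.sum_congr rfl hterm]
    apply geom_zeta_zero hp.pos
    · rw [← pow_mul, mul_comm, pow_mul, hζ.pow_eq_one, one_pow]
    · intro hw
      obtain ⟨t, ht⟩ := (hζ.pow_eq_one_iff_dvd _).mp hw
      rcases t with _ | _ | t
      · omega
      · omega
      · have h2 := Nat.mul_le_mul_left p (show 2 ≤ t+1+1 by omega)
        omega

lemma sum_SkSk (hp : p.Prime) (hζ : IsPrimitiveRoot ζ p) :
    ∑ k ∈ Finset.range p, (∑ j ∈ Finset.range p, (j:K)*(ζ^k)^j)
      * (∑ l ∈ Finset.range p, (l:K)*(ζ^(p-k))^l)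
    = p * ∑ j ∈ Finset.range p, (j:K)^2 := by
  have e1 : ∀ k ∈ Finset.range p, (∑ j ∈ Finset.range p, (j:K)*(ζ^k)^j)
      * (∑ l ∈ Finset.range p, (l:K)*(ζ^(p-k))^l)
      = ∑ j ∈ Finset.range p, ∑ l ∈ Finset.range p,
          ((j:K)*(l:K)) * ((ζ^k)^j * (ζ^(p-k))^l) := by
    intro k _
    rw [Finset.sum_mul_sum]
    exact Finset.sum_congr rfl fun j _ => Finset.sum_congr rfl fun l _ => by ring
  rw [Finset.sum_congr rfl e1, Finset.sum_comm]
  have e2 : ∀ j ∈ Finset.range p,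
      ∑ k ∈ Finset.range p, ∑ l ∈ Finset.range p, ((j:K)*(l:K)) * ((ζ^k)^j * (ζ^(p-k))^l)
      = (j:K)^2 * p := by
    intro j hj
    rw [Finset.sum_comm]
    have e3 : ∀ l ∈ Finset.range p,
        ∑ k ∈ Finset.range p, ((j:K)*(l:K)) * ((ζ^k)^j * (ζ^(p-k))^l)
        = ((j:K)*(l:K)) * (if j = l then (p:K) else 0) := by
      intro l hl
      rw [← Finset.mul_sum, orth hp hζ (Finset.mem_range.mp hj) (Finset.mem_range.mp hl)]
    rw [Finset.sum_congr rfl e3, Finset.sum_eq_single j]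
    · rw [if_pos rfl]; ring
    · intro l _ hlj
      rw [if_neg (fun h => hlj h.symm), mul_zero]
    · intro h; exact absurd hj h
  rw [Finset.sum_congr rfl e2, Finset.mul_sum]
  exact Finset.sum_congr rfl fun j _ => by ring

end Cyclo3
section Cyclo4

set_option linter.unusedSectionVars false

variable {K : Type*} [Field K] [CharZero K] {p : ℕ} {ζ : K}

lemma sum_cast_sq (n : ℕ) :
    (∑ j ∈ Finset.range n, (j:K)^2) * 6 = (n:K)*((n:K)-1)*(2*(n:K)-1) := by
  induction n with
  | zero => simp
  | succ n ih =>
    rw [Finset.sum_range_succ]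
    push_cast
    linear_combination ih

lemma sum_cast_lin (n : ℕ) :
    (∑ j ∈ Finset.range n, (j:K)) * 2 = (n:K)*((n:K)-1) := by
  induction n with
  | zero => simp
  | succ n ih =>
    rw [Finset.sum_range_succ]
    push_cast
    linear_combination ih

lemma twelve_dvd_sq_sub_one {p : ℕ} (hp : p.Prime) (hp5 : 5 ≤ p) : 12 ∣ p^2 - 1 := by
  have h2 : ¬ (2 ∣ p) := by
    intro h
    rcases (Nat.Prime.eq_one_or_self_of_dvd hp 2 h) with h' | h' <;> omega
  have h3 : ¬ (3 ∣ p) := by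
    intro h
    rcases (Nat.Prime.eq_one_or_self_of_dvd hp 3 h) with h' | h' <;> omega
  obtain ⟨q, r, hr, rfl⟩ : ∃ q r, r < 6 ∧ p = 6*q + r :=
    ⟨p/6, p%6, Nat.mod_lt _ (by norm_num), (Nat.div_add_mod p 6).symm⟩
  interval_cases r
  · exact absurd ⟨3*q, by ring⟩ h2
  · have h : (6*q+1)^2 = 12*(3*q^2+q) + 1 := by ring
    omega
  · exact absurd ⟨3*q+1, by ring⟩ h2
  · exact absurd ⟨2*q+1, by ring⟩ h3
  · exact absurd ⟨3*q+2, by ring⟩ h2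
  · have h : (6*q+5)^2 = 12*(3*q^2+5*q+2) + 1 := by ring
    omega

lemma sum_range_pred {M : Type*} [AddCommMonoid M] {p : ℕ} (hp : 0 < p) (f : ℕ → M) :
    ∑ k ∈ Finset.range p, f k = (∑ i ∈ Finset.range (p-1), f (i+1)) + f 0 := by
  obtain ⟨p', rfl⟩ : ∃ p', p = p'+1 := ⟨p-1, by omega⟩
  simp [Finset.sum_range_succ']

lemma sum_inv_identity (hp : p.Prime) (hp5 : 5 ≤ p) (hζ : IsPrimitiveRoot ζ p) :
    ∑ i ∈ Finset.range (p-1), ((1-ζ^(i+1)) * (1-ζ^(p-(i+1))))⁻¹ = (((p^2-1)/12 : ℕ) : K) := by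
  have hpK : (p:K) ≠ 0 := Nat.cast_ne_zero.mpr hp.pos.ne'
  set S : ℕ → K := fun k => ∑ j ∈ Finset.range p, (j:K)*(ζ^k)^j with hS
  have hterm : ∀ i ∈ Finset.range (p-1),
      ((1-ζ^(i+1)) * (1-ζ^(p-(i+1))))⁻¹ = S (i+1) * S (p-(i+1)) / (p:K)^2 := by
    intro i hi
    have hi' : i < p-1 := Finset.mem_range.mp hi
    have e1 := Sk_mul hp hζ (show 1 ≤ i+1 by omega) (show i+1 ≤ p-1 by omega)
    have e2 := Sk_mul hp hζ (show 1 ≤ p-(i+1) by omega) (show p-(i+1) ≤ p-1 by omega)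
    have hne1 : (1 - ζ^(i+1)) ≠ 0 :=
      sub_ne_zero.mpr (Ne.symm (hζ.pow_ne_one_of_pos_of_lt (by omega) (by omega)))
    have hne2 : (1 - ζ^(p-(i+1))) ≠ 0 :=
      sub_ne_zero.mpr (Ne.symm (hζ.pow_ne_one_of_pos_of_lt (by omega) (by omega)))
    have hprod : ((1-ζ^(i+1)) * (1-ζ^(p-(i+1)))) * (S (i+1) * S (p-(i+1))) = (p:K)^2 := by
      have h12 : ((ζ^(i+1)-1) * S (i+1)) * ((ζ^(p-(i+1))-1) * S (p-(i+1)))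
          = (p:K)*(p:K) := by rw [e1, e2]
      linear_combination h12
    rw [eq_div_iff (pow_ne_zero 2 hpK), inv_mul_eq_div, div_eq_iff (mul_ne_zero hne1 hne2)]
    linear_combination -hprod
  rw [Finset.sum_congr rfl hterm, ← Finset.sum_div]
  have hsplit := sum_range_pred hp.pos (fun k => S k * S (p-k))
  have hS0 : S 0 = ∑ j ∈ Finset.range p, (j:K) := by
    simp [hS]
  have hSp : S (p-0) = ∑ j ∈ Finset.range p, (j:K) := by
    simp only [Nat.sub_zero, hS]
    refine Finset.sum_congr rfl fun j hj => ?_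
    rw [hζ.pow_eq_one, one_pow, mul_one]
  have hbig := sum_SkSk hp hζ
  have hsq := sum_cast_sq (K:=K) p
  have hlin := sum_cast_lin (K:=K) p
  have hc : (((p^2-1)/12 : ℕ) : K) * 12 = (p:K)^2 - 1 := by
    have hdvd := twelve_dvd_sq_sub_one hp hp5
    have h := Nat.div_mul_cancel hdvd
    have hcast := congrArg (Nat.cast : ℕ → K) h
    push_cast [Nat.cast_sub (show 1 ≤ p^2 by nlinarith)] at hcast
    linear_combination hcast
  have hsum2 : ∑ i ∈ Finset.range (p-1), S (i+1) * S (p-(i+1))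
      = (p:K) * (∑ j ∈ Finset.range p, (j:K)^2) - (∑ j ∈ Finset.range p, (j:K))^2 := by
    linear_combination hbig - hsplit - (S 0) * hSp - (∑ j ∈ Finset.range p, (j:K)) * hS0
  rw [hsum2, div_eq_iff (pow_ne_zero 2 hpK)]
  linear_combination ((p:K)/6) * hsq
    + (-(∑ j ∈ Finset.range p, (j:K))/2 - (p:K)*((p:K)-1)/4) * hlin
    + (-(p:K)^2/12) * hc

end Cyclo4
section Cyclo5

set_option linter.unusedSectionVars false

variable {K : Type*} [Field K] [CharZero K] {p : ℕ} {ζ : K}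

lemma exp_modeq {p m k : ℕ} (hp : p.Prime) (hp5 : 5 ≤ p) (h1 : 1 ≤ k) (h2 : k ≤ p-1) :
    ((m+1)*p-k)*(p-k) ≡ (k-1)*(k-1+1)/2 + (p-k-1)*(p-k-1+1)/2 [MOD p] := by
  set s1 := (k-1)*(k-1+1)/2 with hs1d
  set s2 := (p-k-1)*(p-k-1+1)/2 with hs2d
  have hs1 : 2*s1 = (k-1)*(k-1+1) := by
    rw [hs1d, Nat.mul_div_cancel' (even_iff_two_dvd.mp (Nat.even_mul_succ_self (k-1)))]
  have hs2 : 2*s2 = (p-k-1)*(p-k-1+1) := by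
    rw [hs2d, Nat.mul_div_cancel' (even_iff_two_dvd.mp (Nat.even_mul_succ_self (p-k-1)))]
  have hcop : Nat.gcd p 2 = 1 := by
    rcases Nat.coprime_or_dvd_of_prime hp 2 with h | h
    · exact h
    · exact absurd (Nat.le_of_dvd (by norm_num) h) (by omega)
  apply Nat.ModEq.cancel_left_of_coprime hcop
  rw [Nat.modEq_iff_dvd]
  have ck : ((k-1:ℕ):ℤ) = (k:ℤ)-1 := by push_cast [Nat.cast_sub h1]; ring
  have cpk : ((p-k:ℕ):ℤ) = (p:ℤ)-k := by push_cast [Nat.cast_sub (show k ≤ p by omega)]; ring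
  have cpk1 : ((p-k-1:ℕ):ℤ) = (p:ℤ)-k-1 := by
    push_cast [Nat.cast_sub (show k+1 ≤ p by omega)]; omega
  have cNk : (((m+1)*p-k:ℕ):ℤ) = (m+1:ℤ)*p-k := by
    have hkN : k ≤ (m+1)*p := le_trans (by omega) (Nat.le_mul_of_pos_left p (by omega))
    push_cast [Nat.cast_sub hkN]; ring
  have hs1z : (2:ℤ)*(s1:ℤ) = ((k:ℤ)-1)*(((k:ℤ)-1)+1) := by
    have h := congrArg (Nat.cast : ℕ → ℤ) hs1
    push_cast at h
    rw [ck] at h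
    exact h
  have hs2z : (2:ℤ)*(s2:ℤ) = ((p:ℤ)-k-1)*(((p:ℤ)-k-1)+1) := by
    have h := congrArg (Nat.cast : ℕ → ℤ) hs2
    push_cast at h
    rw [cpk1] at h
    exact h
  refine ⟨(p:ℤ)-1-2*(m+1)*(p:ℤ)+2*(m+1)*(k:ℤ), ?_⟩
  push_cast
  rw [cpk, cNk]
  linear_combination hs1z + hs2z

lemma sign_lem (hp : p.Prime) (hp5 : 5 ≤ p) (hζ : IsPrimitiveRoot ζ p) (m : ℕ) {k : ℕ}
    (h1 : 1 ≤ k) (h2 : k ≤ p-1) :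
    aeval ζ (qBinom (p-1) (k-1)) * aeval ζ (qBinom (p-1) (p-k-1)) * ζ^(((m+1)*p-k)*(p-k))
      = -1 := by
  have hR1 := aeval_R hp hζ (k-1) (by omega)
  have hR2 := aeval_R hp hζ (p-k-1) (by omega)
  have hmod : ζ^(((m+1)*p-k)*(p-k))
      = ζ^((k-1)*(k-1+1)/2 + (p-k-1)*(p-k-1+1)/2) :=
    zeta_pow_mod hζ hp.pos (exp_modeq hp hp5 h1 h2)
  rw [hmod, pow_add]
  have hodd : Odd (p-2) := by
    obtain ⟨t, ht⟩ := hp.odd_of_ne_two (by omega)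
    exact ⟨t-1, by omega⟩
  have hpr : ((ζ:K)^((k-1)*(k-1+1)/2) * aeval ζ (qBinom (p-1) (k-1)))
      * (ζ^((p-k-1)*(p-k-1+1)/2) * aeval ζ (qBinom (p-1) (p-k-1))) = -1 := by
    rw [hR1, hR2, ← pow_add, show (k-1)+(p-k-1) = p-2 by omega, hodd.neg_one_pow]
  linear_combination hpr

end Cyclo5
section Main

set_option linter.unusedSectionVars false
set_option maxHeartbeats 1000000

variable {K : Type*} [Field K] [CharZero K] {p : ℕ} {ζ : K}

lemma aeval_geomS (hζ : IsPrimitiveRoot ζ p) (m : ℕ) :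
    aeval ζ (∑ t ∈ Finset.range (m+1), (X : Polynomial ℤ)^(p*t)) = (m:K)+1 := by
  rw [map_sum]
  have h : ∀ t ∈ Finset.range (m+1), aeval ζ ((X : Polynomial ℤ)^(p*t)) = (1:K) := by
    intro t _
    rw [map_pow, aeval_X, pow_mul, hζ.pow_eq_one, one_pow]
  rw [Finset.sum_congr rfl h, Finset.sum_const, Finset.card_range, nsmul_eq_mul, mul_one]
  push_cast
  ring

lemma qdvd_binom_N (hp : p.Prime) (hζ : IsPrimitiveRoot ζ p) (m : ℕ) {k : ℕ}
    (h1 : 1 ≤ k) (h2 : k ≤ p-1) : qInt p ∣ qBinom ((m+1)*p) k := by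
  have hp5 := hp.two_le
  have hNpos : p ≤ (m+1)*p := Nat.le_mul_of_pos_left p (by omega)
  have hq := qMul ((m+1)*p - 1) (k-1)
  rw [show (m+1)*p-1+1 = (m+1)*p by omega, show k-1+1 = k by omega] at hq
  have hdvd : qInt p ∣ qInt k * qBinom ((m+1)*p) k := by
    refine ⟨(∑ t ∈ Finset.range (m+1), (X : Polynomial ℤ)^(p*t)) * qBinom ((m+1)*p - 1) (k-1), ?_⟩
    rw [hq, qInt_mul_decomp m p]
    ring
  rcases (qInt_prime hp).2.2 _ _ hdvd with h | h
  · exfalso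
    exact aeval_qInt_ne_zero hp hζ h1 (by omega) ((qInt_dvd_iff hp hζ _).1 h)
  · exact h

theorem main_aux (hp : p.Prime) (hp5 : 5 ≤ p) (hζ : IsPrimitiveRoot ζ p) (m : ℕ) :
    qInt p ^ 3 ∣
      qBinom ((m + 1) * p) p - (qBinom (m + 1) 1).comp (X ^ (p ^ 2)) +
        (Nat.choose (m + 1) 2 : Polynomial ℤ) * (((p ^ 2 - 1) / 12 : ℕ) : Polynomial ℤ) *
          (1 - X) ^ 2 * qInt p ^ 2 := by
  induction m with
  | zero =>
    have h1 : qBinom ((0+1)*p) p = 1 := by rw [show (0+1)*p = p by ring, qBinom_self]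
    have h2 : qBinom (0+1) 1 = 1 := by rw [show (0:ℕ)+1 = 1 from rfl, qBinom_one, qInt_one]
    rw [h1, h2, one_comp, Nat.choose_eq_zero_of_lt (by norm_num)]
    simp
  | succ m ih =>
    have hppos := hp.pos
    have hNpos : p ≤ (m+1)*p := Nat.le_mul_of_pos_left p (by omega)
    -- Vandermonde decomposition
    have hvdm : qBinom ((m+1+1)*p) p
        = (∑ i ∈ Finset.range (p-1),
            qBinom ((m+1)*p) (i+1) * qBinom p (p-(i+1)) * X^(((m+1)*p-(i+1))*(p-(i+1))))
          + X^(p^2*(m+1)) + qBinom ((m+1)*p) p := by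
      have h0 := qVdm ((m+1)*p) p p
      rw [show (m+1)*p + p = (m+1+1)*p by ring] at h0
      rw [h0, Finset.sum_range_succ, sum_range_pred hp.pos
        (fun j => qBinom ((m+1)*p) j * qBinom p (p-j) * X^(((m+1)*p-j)*(p-j)))]
      rw [Nat.sub_self, mul_zero, pow_zero, qBinom_zero, qBinom_zero, Nat.sub_zero,
        Nat.sub_zero, qBinom_self, show (m+1)*p*p = p^2*(m+1) by ring]
      ring
    -- quotients
    set A : ℕ → Polynomial ℤ := fun i => qBinom ((m+1)*p) (i+1) /ₘ qInt p with hA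
    set B : ℕ → Polynomial ℤ := fun i => qBinom p (p-(i+1)) /ₘ qInt p with hB
    have hAspec : ∀ i < p-1, qInt p * A i = qBinom ((m+1)*p) (i+1) := by
      intro i hi
      have hdvd := qdvd_binom_N hp hζ m (show 1 ≤ i+1 by omega) (show i+1 ≤ p-1 by omega)
      have hmod := (Polynomial.modByMonic_eq_zero_iff_dvd (qInt_monic hp)).2 hdvd
      have hdm := Polynomial.modByMonic_add_div (qBinom ((m+1)*p) (i+1)) (qInt p)
      rw [hmod, zero_add] at hdm
      exact hdm
    have hBspec : ∀ i < p-1, qInt p * B i = qBinom p (p-(i+1)) := by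
      intro i hi
      have hdvd : qInt p ∣ qBinom p (p-(i+1)) :=
        (qInt_dvd_iff hp hζ _).2 (aeval_qBinom_p hp hζ (by omega) (by omega))
      have hmod := (Polynomial.modByMonic_eq_zero_iff_dvd (qInt_monic hp)).2 hdvd
      have hdm := Polynomial.modByMonic_add_div (qBinom p (p-(i+1))) (qInt p)
      rw [hmod, zero_add] at hdm
      exact hdm
    -- the key divisibility of the difference
    have hkey : qInt p ^ 3 ∣
        (∑ i ∈ Finset.range (p-1),
            qBinom ((m+1)*p) (i+1) * qBinom p (p-(i+1)) * X^(((m+1)*p-(i+1))*(p-(i+1))))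
          + ((m+1 : ℕ) : Polynomial ℤ) * (((p ^ 2 - 1) / 12 : ℕ) : Polynomial ℤ)
            * (1 - X) ^ 2 * qInt p ^ 2 := by
      have hfac : ∀ i ∈ Finset.range (p-1),
          qBinom ((m+1)*p) (i+1) * qBinom p (p-(i+1)) * X^(((m+1)*p-(i+1))*(p-(i+1)))
          = qInt p^2 * (A i * B i * X^(((m+1)*p-(i+1))*(p-(i+1)))) := by
        intro i hi
        rw [← hAspec i (Finset.mem_range.mp hi), ← hBspec i (Finset.mem_range.mp hi)]
        ring
      rw [Finset.sum_congr rfl hfac, ← Finset.mul_sum,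
        show ((m+1 : ℕ) : Polynomial ℤ) * (((p ^ 2 - 1) / 12 : ℕ) : Polynomial ℤ)
            * (1 - X) ^ 2 * qInt p ^ 2
          = qInt p^2 * (((m+1 : ℕ) : Polynomial ℤ) * (((p ^ 2 - 1) / 12 : ℕ) : Polynomial ℤ)
            * (1 - X) ^ 2) by ring,
        ← mul_add, show (qInt p)^3 = qInt p^2 * qInt p by ring]
      apply mul_dvd_mul_left
      rw [qInt_dvd_iff hp hζ, map_add, map_sum]
      -- per-term evaluation
      have hterm : ∀ i ∈ Finset.range (p-1),
          aeval ζ (A i * B i * X^(((m+1)*p-(i+1))*(p-(i+1))))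
          = -((m:K)+1) * (1-ζ)^2 * ((1-ζ^(i+1)) * (1-ζ^(p-(i+1))))⁻¹ := by
        intro i hi
        have hi' : i < p-1 := Finset.mem_range.mp hi
        set u := aeval ζ (qInt (i+1)) with hu_def
        set v := aeval ζ (qInt (p-(i+1))) with hv_def
        have hu : u ≠ 0 := aeval_qInt_ne_zero hp hζ (by omega) (by omega)
        have hv : v ≠ 0 := aeval_qInt_ne_zero hp hζ (by omega) (by omega)
        -- haA
        have hq := qMul ((m+1)*p - 1) i
        rw [show (m+1)*p-1+1 = (m+1)*p by omega] at hq
        rw [← hAspec i hi', qInt_mul_decomp m p] at hq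
        have hcanA : qInt (i+1) * A i
            = (∑ t ∈ Finset.range (m+1), (X : Polynomial ℤ)^(p*t)) * qBinom ((m+1)*p-1) i := by
          apply mul_left_cancel₀ (qInt_monic hp).ne_zero
          linear_combination hq
        have haA : u * aeval ζ (A i) = ((m:K)+1) * aeval ζ (qBinom (p-1) i) := by
          have := congrArg (aeval ζ) hcanA
          rw [map_mul, map_mul, aeval_geomS hζ m] at this
          rw [show (m+1)*p-1 = m*p + (p-1) by
            have : (m+1)*p = m*p + p := by ring
            omega] at this
          rw [aeval_shift_iter hp hζ m (p-1) (by omega)] at this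
          exact this
        -- haB
        have hqb := qMul (p-1) (p-(i+1)-1)
        rw [show p-1+1 = p by omega, show p-(i+1)-1+1 = p-(i+1) by omega] at hqb
        rw [← hBspec i hi'] at hqb
        have hcanB : qInt (p-(i+1)) * B i = qBinom (p-1) (p-(i+1)-1) := by
          apply mul_left_cancel₀ (qInt_monic hp).ne_zero
          linear_combination hqb
        have haB : v * aeval ζ (B i) = aeval ζ (qBinom (p-1) (p-(i+1)-1)) := by
          have := congrArg (aeval ζ) hcanB
          rw [map_mul] at this
          exact this
        -- sign
        have hsign := sign_lem hp hp5 hζ m (show 1 ≤ i+1 by omega) (show i+1 ≤ p-1 by omega)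
        rw [show i+1-1 = i from rfl] at hsign
        -- nonzero denominators
        have hne1 : (1 - ζ^(i+1)) ≠ 0 :=
          sub_ne_zero.mpr (Ne.symm (hζ.pow_ne_one_of_pos_of_lt (by omega) (by omega)))
        have hne2 : (1 - ζ^(p-(i+1))) ≠ 0 :=
          sub_ne_zero.mpr (Ne.symm (hζ.pow_ne_one_of_pos_of_lt (by omega) (by omega)))
        have h1' : (1-ζ)*u = 1-ζ^(i+1) := by
          linear_combination -(aeval_qInt_mul ζ (i+1))
        have h2' : (1-ζ)*v = 1-ζ^(p-(i+1)) := by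
          linear_combination -(aeval_qInt_mul ζ (p-(i+1)))
        apply mul_left_cancel₀ (mul_ne_zero hu hv)
        have left : (u*v)*(aeval ζ (A i * B i * X^(((m+1)*p-(i+1))*(p-(i+1)))))
            = -((m:K)+1) := by
          rw [map_mul, map_mul, map_pow, aeval_X]
          calc (u*v)*(aeval ζ (A i) * aeval ζ (B i) * ζ^(((m+1)*p-(i+1))*(p-(i+1))))
              = (u*aeval ζ (A i))*(v*aeval ζ (B i))*ζ^(((m+1)*p-(i+1))*(p-(i+1))) := by ring
            _ = (((m:K)+1)*aeval ζ (qBinom (p-1) i))*(aeval ζ (qBinom (p-1) (p-(i+1)-1)))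
                  *ζ^(((m+1)*p-(i+1))*(p-(i+1))) := by rw [haA, haB]
            _ = ((m:K)+1)*(aeval ζ (qBinom (p-1) i) * aeval ζ (qBinom (p-1) (p-(i+1)-1))
                  *ζ^(((m+1)*p-(i+1))*(p-(i+1)))) := by ring
            _ = -((m:K)+1) := by rw [hsign]; ring
        have right : (u*v)*(-((m:K)+1) * (1-ζ)^2 * ((1-ζ^(i+1)) * (1-ζ^(p-(i+1))))⁻¹)
            = -((m:K)+1) := by
          calc (u*v)*(-((m:K)+1) * (1-ζ)^2 * ((1-ζ^(i+1)) * (1-ζ^(p-(i+1))))⁻¹)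
              = -((m:K)+1) * (((1-ζ)*u)*((1-ζ)*v)
                  * ((1-ζ^(i+1)) * (1-ζ^(p-(i+1))))⁻¹) := by ring
            _ = -((m:K)+1) * (((1-ζ^(i+1)) * (1-ζ^(p-(i+1))))
                  * ((1-ζ^(i+1)) * (1-ζ^(p-(i+1))))⁻¹) := by rw [h1', h2']
            _ = -((m:K)+1) := by
                rw [mul_inv_cancel₀ (mul_ne_zero hne1 hne2), mul_one]
        exact left.trans right.symm
      rw [Finset.sum_congr rfl hterm, ← Finset.mul_sum, sum_inv_identity hp hp5 hζ]
      have hconst : aeval ζ (((m+1 : ℕ) : Polynomial ℤ)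
          * (((p ^ 2 - 1) / 12 : ℕ) : Polynomial ℤ) * (1 - X) ^ 2)
          = ((m:K)+1) * (((p ^ 2 - 1) / 12 : ℕ) : K) * (1-ζ)^2 := by
        rw [map_mul, map_mul, map_pow, map_sub, map_one, aeval_X, map_natCast, map_natCast]
        push_cast
        ring
      rw [hconst]
      ring
    -- assemble
    have hcomp : (qBinom (m+1+1) 1).comp ((X : Polynomial ℤ)^(p^2))
        = (qBinom (m+1) 1).comp (X^(p^2)) + X^(p^2*(m+1)) := by
      rw [qBinom_one, qBinom_one, qInt_succ (m+1), add_comp, pow_comp, X_comp, ← pow_mul]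
    have hchoose : (Nat.choose (m+1+1) 2 : Polynomial ℤ)
        = (Nat.choose (m+1) 2 : Polynomial ℤ) + ((m+1:ℕ) : Polynomial ℤ) := by
      rw [Nat.choose_succ_succ (m+1) 1, Nat.choose_one_right]
      push_cast
      ring
    rw [hvdm, hcomp, hchoose]
    have := dvd_add ih hkey
    convert this using 1
    ring

end Main

theorem qbinom_mp_p_congruence (p m : ℕ) (hp : p.Prime) (hp5 : 5 ≤ p) (hm : 1 ≤ m) :
    qInt p ^ 3 ∣
      qBinom ((m + 1) * p) p - (qBinom (m + 1) 1).comp (X ^ (p ^ 2)) +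
        (Nat.choose (m + 1) 2 : Polynomial ℤ) * (((p ^ 2 - 1) / 12 : ℕ) : Polynomial ℤ) *
          (1 - X) ^ 2 * qInt p ^ 2 := by
  let pp : ℕ+ := ⟨p, hp.pos⟩
  haveI : NeZero p := ⟨hp.ne_zero⟩
  let K := CyclotomicField p ℚ
  haveI : NeZero (p:ℚ) := ⟨Nat.cast_ne_zero.mpr hp.ne_zero⟩
  haveI : IsCyclotomicExtension {p} ℚ K := CyclotomicField.isCyclotomicExtension p ℚ
  let ζ : K := IsCyclotomicExtension.zeta p ℚ K
  have hζ : IsPrimitiveRoot ζ p := IsCyclotomicExtension.zeta_spec p ℚ K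
  exact main_aux hp hp5 hζ m
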